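/- If the tangent kernel is constant along the gradient flow path (K_{w(t)} = K for all t ∈ [0,T]), then the path kernel equals T·K, and the learned model is f(w(T),x) = f(w(0),x) - ∑_i (∫_0^T ℓ'(y_i, f(w(t),x_i)) dt)·K(x, x_i), i.e., an exact kernel machine in the fixed kernel K. -/

import Mathlib

/-!
Along the flow, the chain rule gives
`d/dt f(w t, a) = ⟪∇f_a(w t), -∇L(w t)⟫ = -∑ i, ℓ'(y i, f(w t, x i)) K_{w t}(a, x i)`.
When the tangent kernel is the constant `K`, it factors out of the time integral, and the
fundamental theorem of calculus turns this derivative into the kernel-machine formula.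
-/

open scoped InnerProductSpace
open Set

section GradientCalculus

variable {E : Type*} [NormedAddCommGroup E] [InnerProductSpace ℝ E] [CompleteSpace E]

theorem HasGradientAt.sum {ι : Type*} (s : Finset ι) {g : ι → E → ℝ} {g' : ι → E} {p : E}
    (hg : ∀ i ∈ s, HasGradientAt (g i) (g' i) p) :
    HasGradientAt (fun v => ∑ i ∈ s, g i v) (∑ i ∈ s, g' i) p := by
  rw [hasGradientAt_iff_hasFDerivAt, map_sum]
  exact HasFDerivAt.fun_sum fun i hi => (hg i hi).hasFDerivAt

theorem HasDerivAt.comp_hasGradientAt {φ : ℝ → ℝ} {φ' : ℝ} {g : E → ℝ} {g' : E} {p : E}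
    (hφ : HasDerivAt φ φ' (g p)) (hg : HasGradientAt g g' p) :
    HasGradientAt (fun v => φ (g v)) (φ' • g') p := by
  rw [hasGradientAt_iff_hasFDerivAt, map_smul]
  exact hφ.comp_hasFDerivAt p hg.hasFDerivAt

theorem HasGradientAt.comp_hasDerivAt {g : E → ℝ} {g' : E} {w : ℝ → E} {w' : E} {t : ℝ}
    (hg : HasGradientAt g g' (w t)) (hw : HasDerivAt w w' t) :
    HasDerivAt (fun t => g (w t)) ⟪g', w'⟫_ℝ t := by
  simpa [Function.comp_def] using hg.hasFDerivAt.comp_hasDerivAt t hw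

end GradientCalculus

section KernelMachine

variable {E X ι : Type*} [NormedAddCommGroup E] [InnerProductSpace ℝ E] [CompleteSpace E]
  [Fintype ι] {f : E → X → ℝ} {ℓ ℓ' : ℝ → ℝ → ℝ} {x : ι → X} {y : ι → ℝ}

noncomputable def tangentKernel (f : E → X → ℝ) (v : E) (a b : X) : ℝ :=
  ⟪gradient (fun u => f u a) v, gradient (fun u => f u b) v⟫_ℝ

theorem gradient_sum_loss (hf : ∀ a, Differentiable ℝ fun v => f v a)
    (hℓ : ∀ a b, HasDerivAt (ℓ a) (ℓ' a b) b) (p : E) :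
    gradient (fun v => ∑ i, ℓ (y i) (f v (x i))) p =
      ∑ i, ℓ' (y i) (f p (x i)) • gradient (fun v => f v (x i)) p :=
  HasGradientAt.gradient <| HasGradientAt.sum _ fun i _ =>
    (hℓ (y i) _).comp_hasGradientAt (g := fun v => f v (x i)) (hf (x i) p).hasGradientAt

theorem hasDerivAt_apply_along_gradient_flow
    (hf : ∀ a, Differentiable ℝ fun v => f v a) (hℓ : ∀ a b, HasDerivAt (ℓ a) (ℓ' a b) b)
    {w : ℝ → E} {t : ℝ}
    (hw : HasDerivAt w (-gradient (fun v => ∑ i, ℓ (y i) (f v (x i))) (w t)) t) (a : X) :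
    HasDerivAt (fun t => f (w t) a)
      (-∑ i, ℓ' (y i) (f (w t) (x i)) * tangentKernel f (w t) a (x i)) t := by
  convert ((hf a).differentiableAt.hasGradientAt).comp_hasDerivAt hw using 1
  simp only [gradient_sum_loss hf hℓ, inner_neg_right, inner_sum, real_inner_smul_right,
    tangentKernel]

end KernelMachine

theorem eq_sub_sum_integral_mul_of_hasDerivAt {ι : Type*} (s : Finset ι) {F : ℝ → ℝ}
    {c : ι → ℝ → ℝ} {k : ι → ℝ} {a b : ℝ} (hab : a ≤ b)
    (hc : ∀ i ∈ s, ContinuousOn (c i) (Icc a b))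
    (hF : ∀ t ∈ Icc a b, HasDerivAt F (-∑ i ∈ s, c i t * k i) t) :
    F b = F a - ∑ i ∈ s, (∫ t in a..b, c i t) * k i := by
  have hc_mul : ∀ i ∈ s, ContinuousOn (fun t => c i t * k i) (Icc a b) :=
    fun i hi => (hc i hi).mul continuousOn_const
  rw [← uIcc_of_le hab] at hF
  have hFTC := intervalIntegral.integral_eq_sub_of_hasDerivAt hF
    ((continuousOn_finsetSum s hc_mul).neg.intervalIntegrable_of_Icc hab)
  simp only [intervalIntegral.integral_neg,
    intervalIntegral.integral_finsetSum fun i hi => (hc_mul i hi).intervalIntegrable_of_Icc hab,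
    intervalIntegral.integral_mul_const] at hFTC
  linarith

theorem constant_tangent_kernel_exact_kernel_machine (d n m : ℕ)
    (f : EuclideanSpace ℝ (Fin d) → EuclideanSpace ℝ (Fin n) → ℝ)
    (hf : ∀ x, ContDiff ℝ 1 (fun w => f w x))
    (ℓ ℓ' : ℝ → ℝ → ℝ)
    (hℓ : ∀ a b, HasDerivAt (fun y => ℓ a y) (ℓ' a b) b)
    (hℓ' : ∀ a, Continuous (ℓ' a))
    (x : Fin m → EuclideanSpace ℝ (Fin n)) (y : Fin m → ℝ)
    (L : EuclideanSpace ℝ (Fin d) → ℝ)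
    (hL : L = fun v => ∑ i, ℓ (y i) (f v (x i)))
    (T : ℝ) (hT : 0 ≤ T)
    (w : ℝ → EuclideanSpace ℝ (Fin d))
    (hw : ∀ t ∈ Set.Icc (0 : ℝ) T, HasDerivAt w (-(gradient L (w t))) t)
    (K : EuclideanSpace ℝ (Fin n) → EuclideanSpace ℝ (Fin n) → ℝ)
    (hK : ∀ t ∈ Set.Icc (0 : ℝ) T, ∀ a b : EuclideanSpace ℝ (Fin n),
      (inner ℝ (gradient (fun v => f v a) (w t))
             (gradient (fun v => f v b) (w t)) : ℝ) = K a b) :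
    (∀ a b : EuclideanSpace ℝ (Fin n),
      (∫ t in (0 : ℝ)..T,
        (inner ℝ (gradient (fun v => f v a) (w t))
               (gradient (fun v => f v b) (w t)) : ℝ)) = T * K a b) ∧
    (∀ xq : EuclideanSpace ℝ (Fin n),
      f (w T) xq = f (w 0) xq -
        ∑ i, (∫ t in (0 : ℝ)..T, ℓ' (y i) (f (w t) (x i))) * K xq (x i)) := by
  subst hL
  have hf_diff a : Differentiable ℝ fun v => f v a := (hf a).differentiable one_ne_zero
  have hw_cont : ContinuousOn w (Icc 0 T) := fun t ht => (hw t ht).continuousAt.continuousWithinAt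
  refine ⟨fun a b => ?_, fun xq => ?_⟩
  · rw [intervalIntegral.integral_congr (g := fun _ => K a b)
      fun t ht => hK t (uIcc_of_le hT ▸ ht) a b]
    simp
  · refine eq_sub_sum_integral_mul_of_hasDerivAt (F := fun t => f (w t) xq) _ hT
      (fun i _ => (hℓ' (y i)).comp_continuousOn ((hf (x i)).continuous.comp_continuousOn hw_cont))
      fun t ht => ?_
    simpa only [tangentKernel, hK t ht] using
      hasDerivAt_apply_along_gradient_flow hf_diff hℓ (hw t ht) xq
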